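/- arXiv:1902.09111 — 3 statements merged into one kernel-verified Lean document; each statement's English description precedes it below -/
import Mathlib

section
/- The monomial expansion holds: z^m \bar{z}^n = Σ_{r=0}^{min(m,n)} C(m,r) C(n,r) r! ρ^r J_{m−r,n−r}(z,ρ). -/
open Finset

/-- The complex Hermite polynomial `J_{m,n}` in the two independent variables `z` and `w`
(the latter playing the role of `z̄`), with parameter `ρ`. -/
noncomputable def hermiteJ2 (m n : ℕ) (z w : ℂ) (ρ : ℝ) : ℂ :=
  ∑ r ∈ Finset.range (min m n + 1),
    (-1 : ℂ) ^ r * (r.factorial : ℂ) * (m.choose r : ℂ) * (n.choose r : ℂ) *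
      z ^ (m - r) * w ^ (n - r) * (ρ : ℂ) ^ r

/-!
Substituting the definition of `J` turns the right-hand side into a double sum over `r` and `s`.
Grouping it by `k = r + s`, the identity `C(m,r) C(m-r,k-r) = C(m,k) C(k,r)` factors the `k`-th
group as `C(m,k) C(n,k) k! z^(m-k) w^(n-k) ρ^k` times the alternating sum
`∑ r, (-1)^(k-r) C(k,r) = (1 - 1)^k`, so only `k = 0` survives, leaving `z^m w^n`.
-/

open Nat in
theorem Nat.choose_mul_choose_mul_factorial_mul_sub {m n k r : ℕ} (hrk : r ≤ k) :
    m.choose r * n.choose r * r ! *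
        ((m - r).choose (k - r) * (n - r).choose (k - r) * (k - r)!) =
      m.choose k * n.choose k * k ! * k.choose r := by
  calc m.choose r * n.choose r * r ! *
        ((m - r).choose (k - r) * (n - r).choose (k - r) * (k - r)!)
      = (m.choose r * (m - r).choose (k - r)) * (n.choose r * (n - r).choose (k - r)) *
          (r ! * (k - r)!) := by ring
    _ = (m.choose k * k.choose r) * (n.choose k * k.choose r) * (r ! * (k - r)!) := by
      rw [Nat.choose_mul hrk, Nat.choose_mul hrk]
    _ = m.choose k * n.choose k * (k.choose r * r ! * (k - r)!) * k.choose r := by ring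
    _ = m.choose k * n.choose k * k ! * k.choose r := by
      rw [Nat.choose_mul_factorial_mul_factorial hrk]

theorem sum_range_neg_one_pow_sub_mul_choose {R : Type*} [CommRing R] (k : ℕ) :
    ∑ r ∈ range (k + 1), (-1 : R) ^ (k - r) * k.choose r = 0 ^ k := by
  simpa using (add_pow (1 : R) (-1) k).symm

section HermiteJ

variable {R : Type*} [CommRing R]

def hermiteJ (m n : ℕ) (z w ρ : R) : R :=
  ∑ r ∈ range (min m n + 1),
    (-1) ^ r * (r.factorial : R) * m.choose r * n.choose r * z ^ (m - r) * w ^ (n - r) * ρ ^ r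

theorem hermiteJ2_eq_hermiteJ (m n : ℕ) (z w : ℂ) (ρ : ℝ) :
    hermiteJ2 m n z w ρ = hermiteJ m n z w (ρ : ℂ) := rfl

theorem hermiteJ_double_sum_term_eq {m n k r : ℕ} (hrk : r ≤ k) (z w ρ : R) :
    (m.choose r * n.choose r * r.factorial * ρ ^ r : R) *
        ((-1) ^ (k - r) * ((k - r).factorial : R) * (m - r).choose (k - r) *
          (n - r).choose (k - r) * z ^ (m - r - (k - r)) * w ^ (n - r - (k - r)) * ρ ^ (k - r)) =
      m.choose k * n.choose k * k.factorial * z ^ (m - k) * w ^ (n - k) * ρ ^ k *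
        ((-1) ^ (k - r) * k.choose r) := by
  have hcoeff := congrArg (Nat.cast : ℕ → R)
    (Nat.choose_mul_choose_mul_factorial_mul_sub (m := m) (n := n) hrk)
  push_cast at hcoeff
  have hm : m - r - (k - r) = m - k := by omega
  have hn : n - r - (k - r) = n - k := by omega
  have hρ : ρ ^ r * ρ ^ (k - r) = ρ ^ k := by rw [← pow_add, Nat.add_sub_cancel' hrk]
  rw [hm, hn, ← hρ]
  linear_combination (-1) ^ (k - r) * z ^ (m - k) * w ^ (n - k) * ρ ^ r * ρ ^ (k - r) * hcoeff

theorem pow_mul_pow_eq_sum_hermiteJ (m n : ℕ) (z w ρ : R) :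
    z ^ m * w ^ n =
      ∑ r ∈ range (min m n + 1),
        m.choose r * n.choose r * r.factorial * ρ ^ r * hermiteJ (m - r) (n - r) z w ρ := by
  set K := min m n with hK
  set c : ℕ → R := fun k ↦
    m.choose k * n.choose k * k.factorial * z ^ (m - k) * w ^ (n - k) * ρ ^ k
  set f : ℕ → ℕ → R := fun r s ↦
    (m.choose r * n.choose r * r.factorial * ρ ^ r : R) *
      ((-1) ^ s * (s.factorial : R) * (m - r).choose s * (n - r).choose s *
        z ^ (m - r - s) * w ^ (n - r - s) * ρ ^ s)
  calc z ^ m * w ^ n = ∑ k ∈ range (K + 1), c k * 0 ^ k := by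
        rw [sum_range_succ']
        simp [c]
    _ = ∑ k ∈ range (K + 1), ∑ r ∈ range (k + 1), c k * ((-1) ^ (k - r) * k.choose r) := by
        simp only [← mul_sum, sum_range_neg_one_pow_sub_mul_choose]
    _ = ∑ k ∈ range (K + 1), ∑ r ∈ range (k + 1), f r (k - r) := by
        refine sum_congr rfl fun k _ ↦ sum_congr rfl fun r hr ↦ ?_
        rw [mem_range] at hr
        exact (hermiteJ_double_sum_term_eq (by omega) z w ρ).symm
    _ = ∑ r ∈ range (K + 1), ∑ s ∈ range (K + 1 - r), f r s := sum_range_diag_flip _ f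
    _ = _ := by
        refine sum_congr rfl fun r hr ↦ ?_
        rw [mem_range] at hr
        rw [hermiteJ, mul_sum, show min (m - r) (n - r) + 1 = K + 1 - r by omega]

end HermiteJ

/-- the monomial expansion
`z^m z̄^n = Σ_{r=0}^{min(m,n)} C(m,r) C(n,r) r! ρ^r J_{m−r,n−r}(z,ρ)`. -/
theorem monomial_expansion (m n : ℕ) (z w : ℂ) (ρ : ℝ) :
    z ^ m * w ^ n =
      ∑ r ∈ Finset.range (min m n + 1),
        (m.choose r : ℂ) * (n.choose r : ℂ) * (r.factorial : ℂ) * (ρ : ℂ) ^ r *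
          hermiteJ2 (m - r) (n - r) z w ρ := by
  simpa only [hermiteJ2_eq_hermiteJ] using pow_mul_pow_eq_sum_hermiteJ m n z w (ρ : ℂ)
end

section
/- The product formula for complex Hermite polynomials holds: J_{m,n}(z,ρ) · J_{p,q}(z,ρ) = Σ_{i=0}^{min(m,q)} Σ_{j=0}^{min(n,p)} C(m,i) C(n,j) C(p,j) C(q,i) i! j! ρ^{i+j} J_{m+p−i−j, n+q−i−j}(z,ρ). -/
/-!
Pascal's rule in `m` for the coefficients `C(m,r) C(n,r) r!` of `J_{m,n}` gives the recurrence
`J_{m+1,n} = z J_{m,n} - ρ n J_{m,n-1}`. Multiplying it by `J_{p,q}`, the product formula propagates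
from `(m, n)` and `(m, n - 1)` to `(m + 1, n)`: the same Pascal rule, now for the coefficients
`C(m,i) C(q,i) i!`, together with `(n - j) C(n,j) = n C(n-1,j)` matches the two sides term by term.
Induction on `m` thus reduces everything to `m = 0`, which is the mirror image under `z ↔ w` of the
case `n = 0`, and that case reduces in the same way to `J_{0,0} = 1`.
-/

open Finset

section RangeSums

variable {M : Type*} [AddCommMonoid M]

theorem Finset.sum_range_eq_sum_range_succ_of_lt {f : ℕ → M} {K I : ℕ}
    (hf : ∀ i, K < i → f i = 0) (hI : K < I) :
    ∑ i ∈ range I, f i = ∑ i ∈ range (K + 1), f i := by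
  refine (sum_subset (range_subset_range.2 hI) fun i hi hiK => hf i ?_).symm
  simp only [mem_range] at hi hiK
  omega

theorem Finset.sum_range_succ_of_shift {F f g : ℕ → M} (h0 : F 0 = f 0)
    (hs : ∀ i, F (i + 1) = f (i + 1) + g i) (I : ℕ) :
    ∑ i ∈ range (I + 1), F i = ∑ i ∈ range (I + 1), f i + ∑ i ∈ range I, g i := by
  rw [sum_range_succ', sum_range_succ' f, h0]
  simp only [hs, sum_add_distrib]
  abel

end RangeSums

/-- The number of `r`-edge matchings in the complete bipartite graph `K_{m,n}`. -/
def matchingCount (m n r : ℕ) : ℕ :=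
  m.choose r * n.choose r * r.factorial

section MatchingCount

variable {m n r : ℕ}

theorem matchingCount_comm : matchingCount m n r = matchingCount n m r := by
  simp only [matchingCount, mul_comm (m.choose r)]

@[simp]
theorem matchingCount_zero_right (m n : ℕ) : matchingCount m n 0 = 1 := by
  simp [matchingCount]

theorem matchingCount_eq_zero_iff : matchingCount m n r = 0 ↔ m < r ∨ n < r := by
  simp [matchingCount, Nat.choose_eq_zero_iff, Nat.factorial_ne_zero]

theorem matchingCount_eq_zero_of_lt_left (h : m < r) : matchingCount m n r = 0 :=
  matchingCount_eq_zero_iff.2 (Or.inl h)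

theorem matchingCount_succ_succ :
    matchingCount (m + 1) n (r + 1) =
      matchingCount m n (r + 1) + (n - r) * matchingCount m n r := by
  simp only [matchingCount, Nat.choose_succ_succ', Nat.factorial_succ]
  have := Nat.choose_succ_right_eq n r
  grind

theorem sub_mul_matchingCount : (m - r) * matchingCount m n r = m * matchingCount (m - 1) n r := by
  rcases m with _ | m
  · simp
  · have := Nat.choose_mul_succ_eq m r
    simp only [matchingCount, Nat.add_sub_cancel]
    grind

end MatchingCount

section HermiteJ2

variable {m n : ℕ} {z w : ℂ} {ρ : ℝ}

theorem hermiteJ2_eq_sum_range {K : ℕ} (hK : min m n < K) :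
    hermiteJ2 m n z w ρ =
      ∑ r ∈ range K, (-ρ : ℂ) ^ r * matchingCount m n r * z ^ (m - r) * w ^ (n - r) := by
  rw [sum_range_eq_sum_range_succ_of_lt _ hK, hermiteJ2]
  · refine sum_congr rfl fun r _ => ?_
    rw [neg_pow]
    push_cast [matchingCount]
    ring
  · intro r hr
    rw [matchingCount_eq_zero_iff.2 (by omega)]
    simp

theorem hermiteJ2_swap : hermiteJ2 m n z w ρ = hermiteJ2 n m w z ρ := by
  rw [hermiteJ2_eq_sum_range (lt_add_one _), hermiteJ2_eq_sum_range (K := min m n + 1) (by omega)]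
  refine sum_congr rfl fun r _ => ?_
  rw [matchingCount_comm]
  ring

@[simp]
theorem hermiteJ2_zero_zero : hermiteJ2 0 0 z w ρ = 1 := by
  simp [hermiteJ2]

theorem hermiteJ2_succ_left :
    hermiteJ2 (m + 1) n z w ρ = z * hermiteJ2 m n z w ρ - ρ * n * hermiteJ2 m (n - 1) z w ρ := by
  have hz : ∑ r ∈ range (m + 2),
      (-ρ : ℂ) ^ r * matchingCount m n r * z ^ (m + 1 - r) * w ^ (n - r) =
        z * hermiteJ2 m n z w ρ := by
    rw [hermiteJ2_eq_sum_range (K := m + 2) (by omega), mul_sum]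
    refine sum_congr rfl fun r _ => ?_
    rcases le_or_gt r m with hr | hr
    · rw [show m + 1 - r = m - r + 1 by omega, pow_succ]
      ring
    · simp [matchingCount_eq_zero_of_lt_left hr]
  rw [hermiteJ2_eq_sum_range (K := m + 1 + 1) (by omega),
    sum_range_succ_of_shift (g := fun r => -(ρ * n) *
      ((-ρ : ℂ) ^ r * matchingCount m (n - 1) r * z ^ (m - r) * w ^ (n - 1 - r))) _ _ (m + 1),
    hz, ← mul_sum, ← hermiteJ2_eq_sum_range (by omega)]
  · ring
  · simp
  · intro r
    have key : ((n - r : ℕ) : ℂ) * matchingCount m n r = n * matchingCount m (n - 1) r := by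
      rw [matchingCount_comm, matchingCount_comm (n := n - 1)]
      exact_mod_cast sub_mul_matchingCount
    rw [matchingCount_succ_succ, show m + 1 - (r + 1) = m - r by omega,
      show n - (r + 1) = n - 1 - r by omega]
    push_cast
    linear_combination (-ρ : ℂ) ^ (r + 1) * z ^ (m - r) * w ^ (n - 1 - r) * key

end HermiteJ2

noncomputable def hermiteProductSum (I J m n p q : ℕ) (z w : ℂ) (ρ : ℝ) : ℂ :=
  ∑ i ∈ range I, ∑ j ∈ range J, (matchingCount m q i * matchingCount n p j : ℂ) *
    (ρ : ℂ) ^ (i + j) * hermiteJ2 (m + p - i - j) (n + q - i - j) z w ρ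

section HermiteProductSum

variable {I J m n p q : ℕ} {z w : ℂ} {ρ : ℝ}

theorem hermiteProductSum_eq_of_lt (hI : min m q < I) (hJ : min n p < J) :
    hermiteProductSum I J m n p q z w ρ =
      hermiteProductSum (min m q + 1) (min n p + 1) m n p q z w ρ := by
  unfold hermiteProductSum
  rw [sum_range_eq_sum_range_succ_of_lt _ hI]
  · refine sum_congr rfl fun i _ => sum_range_eq_sum_range_succ_of_lt (fun j hj => ?_) hJ
    rw [matchingCount_eq_zero_iff (m := n) |>.2 (by omega)]
    simp
  · intro i hi
    refine sum_eq_zero fun j _ => ?_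
    rw [matchingCount_eq_zero_iff.2 (by omega)]
    simp

theorem hermiteProductSum_swap :
    hermiteProductSum I J m n p q z w ρ = hermiteProductSum J I n m q p w z ρ := by
  unfold hermiteProductSum
  rw [sum_comm]
  refine sum_congr rfl fun j _ => sum_congr rfl fun i _ => ?_
  rw [hermiteJ2_swap, add_comm j i, show n + q - j - i = n + q - i - j by omega,
    show m + p - j - i = m + p - i - j by omega]
  ring

/-- The recurrence for `J_{m+p-i-j, n+q-i-j}` splits `ρ (n+q-i-j)` into `ρ (n-j)`, which cancels the
`J_{m,n-1}` term, and `ρ (q-i)`, which Pascal's rule turns into the coefficient shift in `i`. -/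
theorem hermiteJ2_summand_recurrence (i j : ℕ) :
    z * ((matchingCount m q i * matchingCount n p j : ℂ) * (ρ : ℂ) ^ (i + j) *
        hermiteJ2 (m + p - i - j) (n + q - i - j) z w ρ) -
      ρ * n * ((matchingCount m q i * matchingCount (n - 1) p j : ℂ) * (ρ : ℂ) ^ (i + j) *
        hermiteJ2 (m + p - i - j) (n - 1 + q - i - j) z w ρ) =
    (matchingCount m q i * matchingCount n p j : ℂ) * (ρ : ℂ) ^ (i + j) *
        hermiteJ2 (m + 1 + p - i - j) (n + q - i - j) z w ρ +
      ((q - i : ℕ) * matchingCount m q i * matchingCount n p j : ℂ) * (ρ : ℂ) ^ (i + j + 1) *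
        hermiteJ2 (m + p - i - j) (n + q - i - j - 1) z w ρ := by
  have hn : (n : ℂ) * matchingCount (n - 1) p j = (n - j : ℕ) * matchingCount n p j := by
    exact_mod_cast sub_mul_matchingCount.symm
  by_cases hzero : matchingCount m q i = 0 ∨ matchingCount n p j = 0
  · rcases hzero with h | h
    · simp [h]
    · have hn0 : (n : ℂ) * matchingCount (n - 1) p j = 0 := by simp [hn, h]
      simp only [h, Nat.cast_zero, mul_zero, zero_mul, add_zero, sub_eq_zero]
      linear_combination -(ρ : ℂ) ^ (i + j + 1) * matchingCount m q i *
        hermiteJ2 (m + p - i - j) (n - 1 + q - i - j) z w ρ * hn0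
  obtain ⟨⟨him, hiq⟩, hjn, hjp⟩ : (i ≤ m ∧ i ≤ q) ∧ j ≤ n ∧ j ≤ p := by
    simpa [matchingCount_eq_zero_iff, not_or, not_lt] using hzero
  have hrec := hermiteJ2_succ_left (m := m + p - i - j) (n := n + q - i - j) (z := z) (w := w)
    (ρ := ρ)
  rw [show m + p - i - j + 1 = m + 1 + p - i - j by omega] at hrec
  have hY : ((n + q - i - j : ℕ) : ℂ) = (n - j : ℕ) + (q - i : ℕ) := by
    rw [← Nat.cast_add]
    congr 1
    omega
  have hY' : ((n - j : ℕ) : ℂ) * hermiteJ2 (m + p - i - j) (n - 1 + q - i - j) z w ρ =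
      (n - j : ℕ) * hermiteJ2 (m + p - i - j) (n + q - i - j - 1) z w ρ := by
    rcases hjn.lt_or_eq with hj | rfl
    · rw [show n - 1 + q - i - j = n + q - i - j - 1 by omega]
    · simp
  rw [hY] at hrec
  linear_combination (-(ρ : ℂ) ^ (i + j + 1) * matchingCount m q i *
        hermiteJ2 (m + p - i - j) (n - 1 + q - i - j) z w ρ) * hn
      - (matchingCount m q i * matchingCount n p j : ℂ) * (ρ : ℂ) ^ (i + j) * hrec
      - (matchingCount m q i * matchingCount n p j : ℂ) * (ρ : ℂ) ^ (i + j + 1) * hY'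

theorem hermiteJ2_mul_succ_left
    (h : hermiteJ2 m n z w ρ * hermiteJ2 p q z w ρ =
      hermiteProductSum (min m q + 1) (min n p + 1) m n p q z w ρ)
    (h' : hermiteJ2 m (n - 1) z w ρ * hermiteJ2 p q z w ρ =
      hermiteProductSum (min m q + 1) (min (n - 1) p + 1) m (n - 1) p q z w ρ) :
    hermiteJ2 (m + 1) n z w ρ * hermiteJ2 p q z w ρ =
      hermiteProductSum (min (m + 1) q + 1) (min n p + 1) (m + 1) n p q z w ρ := by
  rw [← hermiteProductSum_eq_of_lt (I := m + 1) (J := n + 1) (by omega) (by omega)] at h h'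
  rw [← hermiteProductSum_eq_of_lt (I := m + 2) (J := n + 1) (by omega) (by omega),
    hermiteJ2_succ_left, sub_mul, mul_assoc, mul_assoc, h, h']
  unfold hermiteProductSum
  rw [sum_range_succ_of_shift
    (f := fun i => ∑ j ∈ range (n + 1), (matchingCount m q i * matchingCount n p j : ℂ) *
      (ρ : ℂ) ^ (i + j) * hermiteJ2 (m + 1 + p - i - j) (n + q - i - j) z w ρ)
    (g := fun i => ∑ j ∈ range (n + 1),
      ((q - i : ℕ) * matchingCount m q i * matchingCount n p j : ℂ) * (ρ : ℂ) ^ (i + j + 1) *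
        hermiteJ2 (m + p - i - j) (n + q - i - j - 1) z w ρ) _ _ (m + 1),
    sum_range_succ _ (m + 1), matchingCount_eq_zero_of_lt_left (lt_add_one m)]
  · simp only [Nat.cast_zero, zero_mul, sum_const_zero, add_zero, mul_sum, ← sum_sub_distrib,
      ← sum_add_distrib, hermiteJ2_summand_recurrence]
  · simp
  · intro i
    rw [← sum_add_distrib]
    refine sum_congr rfl fun j _ => ?_
    rw [matchingCount_succ_succ, show m + 1 + p - (i + 1) - j = m + p - i - j by omega,
      show n + q - (i + 1) - j = n + q - i - j - 1 by omega]
    push_cast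
    ring

end HermiteProductSum

theorem hermiteJ2_mul_eq_hermiteProductSum_zero_right (m p q : ℕ) (z w : ℂ) (ρ : ℝ) :
    hermiteJ2 m 0 z w ρ * hermiteJ2 p q z w ρ =
      hermiteProductSum (min m q + 1) (min 0 p + 1) m 0 p q z w ρ := by
  induction m with
  | zero => simp [hermiteProductSum]
  | succ m ih => exact hermiteJ2_mul_succ_left ih ih

theorem hermiteJ2_mul_eq_hermiteProductSum (m n p q : ℕ) (z w : ℂ) (ρ : ℝ) :
    hermiteJ2 m n z w ρ * hermiteJ2 p q z w ρ =
      hermiteProductSum (min m q + 1) (min n p + 1) m n p q z w ρ := by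
  induction m generalizing n with
  | zero =>
    rw [hermiteJ2_swap, hermiteJ2_swap (m := p), hermiteJ2_mul_eq_hermiteProductSum_zero_right,
      hermiteProductSum_swap, min_comm, min_comm q]
  | succ m ih => exact hermiteJ2_mul_succ_left (ih n) (ih (n - 1))

/-- the product formula for complex Hermite polynomials:
`J_{m,n} J_{p,q} = Σ_{i=0}^{min(m,q)} Σ_{j=0}^{min(n,p)} C(m,i) C(n,j) C(p,j) C(q,i) i! j!
ρ^{i+j} J_{m+p−i−j, n+q−i−j}`. -/
theorem hermiteJ2_product (m n p q : ℕ) (z w : ℂ) (ρ : ℝ) :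
    hermiteJ2 m n z w ρ * hermiteJ2 p q z w ρ =
      ∑ i ∈ Finset.range (min m q + 1), ∑ j ∈ Finset.range (min n p + 1),
        (m.choose i : ℂ) * (n.choose j : ℂ) * (p.choose j : ℂ) * (q.choose i : ℂ) *
          (i.factorial : ℂ) * (j.factorial : ℂ) * (ρ : ℂ) ^ (i + j) *
          hermiteJ2 (m + p - i - j) (n + q - i - j) z w ρ := by
  rw [hermiteJ2_mul_eq_hermiteProductSum, hermiteProductSum]
  refine sum_congr rfl fun i _ => sum_congr rfl fun j _ => ?_
  push_cast [matchingCount]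
  ring
end

section
/- For any real c and ρ > 0, J_{m,n}(z,ρ) is an eigenfunction of the operator (1+ic) z ∂/∂z + (1−ic) \bar{z} ∂/∂\bar{z} − 2ρ ∂²/(∂z∂\bar{z}) with eigenvalue m + n + i(m−n)c; that is, [(1+ic) z ∂_z + (1−ic) \bar{z} ∂_{\bar{z}} − 2ρ ∂_z ∂_{\bar{z}}] J_{m,n}(z,ρ) = [m+n+i(m−n)c] J_{m,n}(z,ρ). -/
/-
The operator `(1+ic) z ∂_z + (1-ic) w ∂_w` multiplies the monomial `z^(m-r) w^(n-r) ρ^r` of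
`J_{m,n}` by `m + n + ic(m-n) - 2r`. The mixed term `-2ρ ∂_z ∂_w` contributes exactly the missing
`2r`: it lowers both exponents by one and raises the power of `ρ`, and the recurrence
`(r+1) a_{r+1} = -(m-r)(n-r) a_r` for the coefficients `a_r = (-1)^r r! C(m,r) C(n,r)` maps the
result back onto the monomials of `J_{m,n}`.
-/

open Finset

lemma mul_natCast_mul_pow_sub_one {R : Type*} [CommSemiring R] (k : ℕ) (x : R) :
    x * (k * x ^ (k - 1)) = k * x ^ k := by
  cases k with
  | zero => simp
  | succ k => rw [Nat.add_sub_cancel]; ring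

namespace hermiteJ2

noncomputable def coeff (m n r : ℕ) : ℂ :=
  (-1 : ℂ) ^ r * (r.factorial : ℂ) * (m.choose r : ℂ) * (n.choose r : ℂ)

lemma eq_sum_coeff (m n : ℕ) (z w : ℂ) (ρ : ℝ) :
    hermiteJ2 m n z w ρ =
      ∑ r ∈ range (min m n + 1), coeff m n r * z ^ (m - r) * w ^ (n - r) * (ρ : ℂ) ^ r :=
  rfl

lemma succ_mul_coeff_succ (m n r : ℕ) :
    (r + 1 : ℂ) * coeff m n (r + 1) = -(((m - r : ℕ) : ℂ) * ((n - r : ℕ) : ℂ) * coeff m n r) := by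
  have hm := congrArg (Nat.cast : ℕ → ℂ) (Nat.choose_succ_right_eq m r)
  have hn := congrArg (Nat.cast : ℕ → ℂ) (Nat.choose_succ_right_eq n r)
  push_cast at hm hn
  simp only [coeff, Nat.factorial_succ, pow_succ]
  push_cast
  linear_combination
    -(-1 : ℂ) ^ r * r.factorial *
      ((n.choose (r + 1) : ℂ) * (r + 1) * hm + (m.choose r : ℂ) * ((m - r : ℕ) : ℂ) * hn)

variable (m n : ℕ) (ρ : ℝ)

lemma hasDerivAt_left (z w : ℂ) :
    HasDerivAt (fun z => hermiteJ2 m n z w ρ)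
      (∑ r ∈ range (min m n + 1),
        coeff m n r * (((m - r : ℕ) : ℂ) * z ^ (m - r - 1)) * w ^ (n - r) * (ρ : ℂ) ^ r) z :=
  HasDerivAt.fun_sum fun r _ =>
    (((hasDerivAt_pow (m - r) z).const_mul (coeff m n r)).mul_const _).mul_const _

lemma hasDerivAt_right (z w : ℂ) :
    HasDerivAt (fun w => hermiteJ2 m n z w ρ)
      (∑ r ∈ range (min m n + 1),
        coeff m n r * z ^ (m - r) * (((n - r : ℕ) : ℂ) * w ^ (n - r - 1)) * (ρ : ℂ) ^ r) w :=
  HasDerivAt.fun_sum fun r _ =>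
    ((hasDerivAt_pow (n - r) w).const_mul (coeff m n r * z ^ (m - r))).mul_const _

lemma deriv_deriv (z w : ℂ) :
    deriv (fun z => deriv (fun w => hermiteJ2 m n z w ρ) w) z =
      ∑ r ∈ range (min m n + 1), coeff m n r * (((m - r : ℕ) : ℂ) * z ^ (m - r - 1)) *
        (((n - r : ℕ) : ℂ) * w ^ (n - r - 1)) * (ρ : ℂ) ^ r := by
  simp only [(hasDerivAt_right m n ρ _ w).deriv]
  exact (HasDerivAt.fun_sum fun r _ =>
    (((hasDerivAt_pow (m - r) z).const_mul (coeff m n r)).mul_const _).mul_const _).deriv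

lemma mul_deriv_left (z w : ℂ) :
    z * deriv (fun z => hermiteJ2 m n z w ρ) z =
      ∑ r ∈ range (min m n + 1),
        ((m - r : ℕ) : ℂ) * (coeff m n r * z ^ (m - r) * w ^ (n - r) * (ρ : ℂ) ^ r) := by
  rw [(hasDerivAt_left m n ρ z w).deriv, mul_sum]
  refine sum_congr rfl fun r _ => ?_
  linear_combination
    (coeff m n r * w ^ (n - r) * (ρ : ℂ) ^ r) * mul_natCast_mul_pow_sub_one (m - r) z

lemma mul_deriv_right (z w : ℂ) :
    w * deriv (fun w => hermiteJ2 m n z w ρ) w =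
      ∑ r ∈ range (min m n + 1),
        ((n - r : ℕ) : ℂ) * (coeff m n r * z ^ (m - r) * w ^ (n - r) * (ρ : ℂ) ^ r) := by
  rw [(hasDerivAt_right m n ρ z w).deriv, mul_sum]
  refine sum_congr rfl fun r _ => ?_
  linear_combination
    (coeff m n r * z ^ (m - r) * (ρ : ℂ) ^ r) * mul_natCast_mul_pow_sub_one (n - r) w

lemma mul_deriv_deriv (z w : ℂ) :
    (ρ : ℂ) * deriv (fun z => deriv (fun w => hermiteJ2 m n z w ρ) w) z =
      -∑ r ∈ range (min m n + 1),
        (r : ℂ) * (coeff m n r * z ^ (m - r) * w ^ (n - r) * (ρ : ℂ) ^ r) := by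
  have top_vanishes : m - min m n = 0 ∨ n - min m n = 0 := by omega
  rw [deriv_deriv, mul_sum, sum_range_succ, sum_range_succ', Nat.cast_zero, zero_mul, add_zero,
    add_eq_left.mpr (by rcases top_vanishes with h | h <;> simp [h]), ← sum_neg_distrib]
  refine sum_congr rfl fun r _ => ?_
  rw [← Nat.sub_sub, ← Nat.sub_sub, Nat.cast_succ]
  linear_combination
    z ^ (m - r - 1) * w ^ (n - r - 1) * (ρ : ℂ) ^ (r + 1) * succ_mul_coeff_succ m n r

end hermiteJ2

theorem hermiteJ2_eigenfunction_general (m n : ℕ) (c : ℝ) (ρ : ℝ) (z w : ℂ) :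
    (1 + Complex.I * c) * z * deriv (fun z' => hermiteJ2 m n z' w ρ) z
      + (1 - Complex.I * c) * w * deriv (fun w' => hermiteJ2 m n z w' ρ) w
      - 2 * (ρ : ℂ) * deriv (fun z' => deriv (fun w' => hermiteJ2 m n z' w' ρ) w) z
    = ((m : ℂ) + (n : ℂ) + Complex.I * ((m : ℂ) - (n : ℂ)) * c) * hermiteJ2 m n z w ρ := by
  rw [mul_assoc _ z, hermiteJ2.mul_deriv_left, mul_assoc _ w, hermiteJ2.mul_deriv_right,
    mul_assoc 2, hermiteJ2.mul_deriv_deriv, hermiteJ2.eq_sum_coeff, mul_neg, sub_neg_eq_add]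
  simp only [mul_sum, ← sum_add_distrib]
  refine sum_congr rfl fun r hr => ?_
  have hrm : r ≤ m := (Nat.lt_succ_iff.mp (mem_range.mp hr)).trans (min_le_left m n)
  have hrn : r ≤ n := (Nat.lt_succ_iff.mp (mem_range.mp hr)).trans (min_le_right m n)
  push_cast [hrm, hrn]
  ring

/-- `J_{m,n}(·,ρ)` is an eigenfunction of
`(1+ic) z ∂_z + (1−ic) z̄ ∂_{z̄} − 2ρ ∂_z ∂_{z̄}` with eigenvalue `m + n + i(m−n)c`. -/
theorem hermiteJ2_eigenfunction (m n : ℕ) (c : ℝ) (ρ : ℝ) (hρ : 0 < ρ) (z w : ℂ) :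
    (1 + Complex.I * c) * z * deriv (fun z' => hermiteJ2 m n z' w ρ) z
      + (1 - Complex.I * c) * w * deriv (fun w' => hermiteJ2 m n z w' ρ) w
      - 2 * (ρ : ℂ) * deriv (fun z' => deriv (fun w' => hermiteJ2 m n z' w' ρ) w) z
    = ((m : ℂ) + (n : ℂ) + Complex.I * ((m : ℂ) - (n : ℂ)) * c) * hermiteJ2 m n z w ρ :=
  hermiteJ2_eigenfunction_general m n c ρ z w
end
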